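/- Let q ≥ 2, n ≥ 1, and let a_1, a_2, …, a_s be real numbers each at least (q−1)n/q. Then the function h : {0,1,…,n} → ℝ given by h(x) = (a_1 − x)(a_2 − x)⋯(a_s − x) is positive definite with respect to the Krawtchouk expansion for parameters n and q. -/

import Mathlib

open Finset

/-- The Krawtchouk polynomial `K_k(x; n, q)` evaluated at a natural number `x`. -/
noncomputable def kraw (n q k x : ℕ) : ℝ :=
  ∑ j ∈ Finset.range (k+1),
    (-1 : ℝ)^j * ((q : ℝ) - 1)^(k-j) * (x.choose j : ℝ) * ((n-x).choose (k-j) : ℝ)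

/-- The finite difference operator `Δf(m) = f(m+1) − f(m)`. -/
def fdiff (f : ℕ → ℝ) : ℕ → ℝ := fun m => f (m+1) - f m

/-- `f` is completely monotonic on `{a, a+1, …, b}`:
`(−1)^k Δ^k f(i) ≥ 0` whenever `k ≥ 0` and `a ≤ i ≤ b − k`. -/
def CompletelyMonotonicOn (f : ℕ → ℝ) (a b : ℕ) : Prop :=
  ∀ k i, a ≤ i → i + k ≤ b → 0 ≤ (-1 : ℝ)^k * (fdiff^[k] f) i

/-- A quasicode of length `n` and size `N` over an alphabet of size `q`,
recorded via its entries `A 0, …, A n`. -/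
structure IsQuasicode (q n : ℕ) (N : ℝ) (A : ℕ → ℝ) : Prop where
  nonneg : ∀ i, i ≤ n → 0 ≤ A i
  delsarte : ∀ j, j ≤ n → 0 ≤ ∑ i ∈ Finset.range (n+1), A i * kraw n q j i
  size : ∑ i ∈ Finset.range (n+1), A i = N
  zeroth : A 0 = 1

/-- A universally optimal quasicode: a quasicode that minimizes `f`-energy
among all quasicodes of the same length and size, for every completely
monotonic potential function `f`. -/
def IsUOQuasicode (q n : ℕ) (N : ℝ) (A : ℕ → ℝ) : Prop :=
  IsQuasicode q n N A ∧
    ∀ f : ℕ → ℝ, CompletelyMonotonicOn f 0 n →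
      ∀ B : ℕ → ℝ, IsQuasicode q n N B →
        ∑ i ∈ Finset.range (n+1), f i * A i ≤ ∑ i ∈ Finset.range (n+1), f i * B i

/-- The quasicode `A` (of size `N`) is a `t`-design: `A^⊥_j = 0` for `1 ≤ j ≤ t`. -/
def IsDesign (q n t : ℕ) (A : ℕ → ℝ) : Prop :=
  ∀ j, 1 ≤ j → j ≤ t → ∑ i ∈ Finset.range (n+1), A i * kraw n q j i = 0

/-- `h : {0,…,n} → ℝ` is positive definite: its (unique) Krawtchouk
coefficients are all nonnegative. -/
def PositiveDefinite (q n : ℕ) (h : ℕ → ℝ) : Prop :=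
  ∃ c : ℕ → ℝ, (∀ j, j ≤ n → 0 ≤ c j) ∧
    ∀ i, i ≤ n → h i = ∑ j ∈ Finset.range (n+1), c j * kraw n q j i

open scoped Classical in
/-- The support of a quasicode: `{i > 0 : A i ≠ 0}`. -/
noncomputable def supp (n : ℕ) (A : ℕ → ℝ) : Finset ℕ :=
  (Finset.Icc 1 n).filter (fun i => A i ≠ 0)

/-!
Writing `a - x = α + K₁(x) / q` with `α = a - (q - 1) n / q ≥ 0`, it suffices that the cone of
positive definite functions is closed under multiplication by `K₁`. This follows from the
three-term recurrence `K₁ Kₖ = (k + 1) Kₖ₊₁ + (q - 2) k Kₖ + (q - 1) (n - k + 1) Kₖ₋₁`, whose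
coefficients are nonnegative for `q ≥ 2` and `k ≤ n`. The recurrence is read off the coefficients
of a first-order differential equation satisfied by the generating polynomial
`∑ₖ Kₖ(x) zᵏ = (1 - z)ˣ (1 + (q - 1) z)ⁿ⁻ˣ`.
-/

open Polynomial

theorem Polynomial.coeff_one_add_C_mul_X_pow {R : Type*} [CommSemiring R] (r : R) (m j : ℕ) :
    ((1 + C r * X) ^ m).coeff j = r ^ j * m.choose j := by
  rw [add_comm, add_pow, finsetSum_coeff]
  simp only [one_pow, mul_one, mul_pow, ← C_pow, ← C_eq_natCast, mul_assoc, coeff_C_mul, X_pow_mul]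
  rw [Finset.sum_eq_single j]
  · simp
  · intro b _ hb
    simp [hb.symm]
  · intro hj
    simp [Nat.choose_eq_zero_of_lt (by simpa using hj)]

theorem Polynomial.mul_derivative_pow {R : Type*} [CommSemiring R] (p : R[X]) (k : ℕ) :
    p * derivative (p ^ k) = C (k : R) * derivative p * p ^ k := by
  cases k with
  | zero => simp
  | succ k =>
    rw [derivative_pow_succ]
    push_cast
    ring

theorem Polynomial.coeff_X_mul_derivative {R : Type*} [Semiring R] (p : R[X]) (k : ℕ) :
    (X * derivative p).coeff k = p.coeff k * k := by
  cases k with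
  | zero => simp
  | succ k =>
    rw [coeff_X_mul, coeff_derivative]
    push_cast
    rfl

noncomputable def krawGen (n q x : ℕ) : ℝ[X] :=
  (1 - X) ^ x * (1 + C ((q : ℝ) - 1) * X) ^ (n - x)

theorem coeff_krawGen (n q x k : ℕ) : (krawGen n q x).coeff k = kraw n q k x := by
  have h : (1 - X : ℝ[X]) = 1 + C (-1) * X := by simp [sub_eq_add_neg]
  rw [krawGen, coeff_mul, Finset.Nat.sum_antidiagonal_eq_sum_range_succ_mk, kraw]
  refine Finset.sum_congr rfl fun j _ => ?_
  rw [h, coeff_one_add_C_mul_X_pow, coeff_one_add_C_mul_X_pow]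
  ring

/-- `(1 - z) (1 + (q - 1) z) G' = (K₁(x) - (q - 1) n z) G` for `G = krawGen n q x`, expanded so
that coefficients can be compared termwise. -/
theorem krawGen_ode {n x : ℕ} (q : ℕ) (hx : x ≤ n) :
    derivative (krawGen n q x) + C ((q : ℝ) - 2) * (X * derivative (krawGen n q x))
      - C ((q : ℝ) - 1) * (X * (X * derivative (krawGen n q x)))
      = C (((q : ℝ) - 1) * n - q * x) * krawGen n q x
        - C (((q : ℝ) - 1) * n) * (X * krawGen n q x) := by
  set c : ℝ[X] := C ((q : ℝ) - 1)
  have hc2 : C ((q : ℝ) - 2) = c - 1 := by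
    simp only [c, ← C_1, ← C_sub]
    ring_nf
  have hc1 : C (((q : ℝ) - 1) * n - q * x) = c * (n - x : ℕ) - x := by
    simp only [c, ← C_eq_natCast, ← C_mul, ← C_sub]
    push_cast [Nat.cast_sub hx]
    ring_nf
  have hcn : C (((q : ℝ) - 1) * n) = c * (n - x : ℕ) + c * x := by
    simp only [c, ← C_eq_natCast, ← C_mul, ← C_add]
    push_cast [Nat.cast_sub hx]
    ring_nf
  have hu := mul_derivative_pow (1 - X : ℝ[X]) x
  have hv := mul_derivative_pow (1 + c * X) (n - x)
  simp only [derivative_sub, derivative_add, derivative_one, derivative_X, derivative_C_mul_X, c,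
    map_natCast] at hu hv
  rw [krawGen, derivative_mul, hc2, hc1, hcn]
  linear_combination (1 + c * X) * (1 + c * X) ^ (n - x) * hu + (1 - X) * (1 - X) ^ x * hv

theorem kraw_zero (n q x : ℕ) : kraw n q 0 x = 1 := by
  simp [kraw]

theorem kraw_one {n x : ℕ} (q : ℕ) (hx : x ≤ n) : kraw n q 1 x = ((q : ℝ) - 1) * n - q * x := by
  simp only [kraw, Finset.sum_range_succ, Finset.sum_range_zero]
  norm_num [Nat.choose_one_right]
  push_cast [Nat.cast_sub hx]
  ring

theorem kraw_eq_zero_of_lt {n x k : ℕ} (q : ℕ) (hx : x ≤ n) (hk : n < k) : kraw n q k x = 0 := by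
  refine Finset.sum_eq_zero fun j _ => ?_
  rcases le_or_gt j x with hj | hj
  · simp [Nat.choose_eq_zero_of_lt (by omega : n - x < k - j)]
  · simp [Nat.choose_eq_zero_of_lt hj]

theorem kraw_one_mul_kraw_succ {n x : ℕ} (q k : ℕ) (hx : x ≤ n) :
    kraw n q 1 x * kraw n q (k + 1) x
      = (k + 2) * kraw n q (k + 2) x + ((q : ℝ) - 2) * (k + 1) * kraw n q (k + 1) x
        + ((q : ℝ) - 1) * (n - k) * kraw n q k x := by
  have h := congrArg (coeff · (k + 1)) (krawGen_ode q hx)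
  simp only [coeff_add, coeff_sub, coeff_C_mul, coeff_X_mul, coeff_derivative,
    coeff_X_mul_derivative, coeff_krawGen] at h
  rw [kraw_one q hx]
  push_cast at h
  linear_combination -h

section PositiveDefinite

variable {q n : ℕ}

theorem PositiveDefinite.congr {h g : ℕ → ℝ} (hh : PositiveDefinite q n h)
    (hg : ∀ i ≤ n, g i = h i) : PositiveDefinite q n g := by
  obtain ⟨c, hc, hrep⟩ := hh
  exact ⟨c, hc, fun i hi => (hg i hi).trans (hrep i hi)⟩

theorem positiveDefinite_zero : PositiveDefinite q n 0 :=
  ⟨0, fun _ _ => le_rfl, fun _ _ => by simp⟩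

theorem PositiveDefinite.add {h g : ℕ → ℝ} (hh : PositiveDefinite q n h)
    (hg : PositiveDefinite q n g) : PositiveDefinite q n (h + g) := by
  obtain ⟨c, hc, hrepc⟩ := hh
  obtain ⟨d, hd, hrepd⟩ := hg
  refine ⟨c + d, fun j hj => add_nonneg (hc j hj) (hd j hj), fun i hi => ?_⟩
  simp only [Pi.add_apply, hrepc i hi, hrepd i hi, add_mul, Finset.sum_add_distrib]

theorem PositiveDefinite.const_mul {h : ℕ → ℝ} (hh : PositiveDefinite q n h) {r : ℝ}
    (hr : 0 ≤ r) : PositiveDefinite q n (fun x => r * h x) := by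
  obtain ⟨c, hc, hrep⟩ := hh
  refine ⟨fun j => r * c j, fun j hj => mul_nonneg hr (hc j hj), fun i hi => ?_⟩
  simp only [hrep i hi, Finset.mul_sum, mul_assoc]

theorem PositiveDefinite.sum {ι : Type*} (s : Finset ι) {h : ι → ℕ → ℝ}
    (hh : ∀ k ∈ s, PositiveDefinite q n (h k)) : PositiveDefinite q n (∑ k ∈ s, h k) :=
  Finset.sum_induction h _ (fun _ _ => PositiveDefinite.add) positiveDefinite_zero hh

theorem positiveDefinite_kraw (k : ℕ) : PositiveDefinite q n (fun x => kraw n q k x) := by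
  by_cases hk : k ≤ n
  · refine ⟨fun j => if j = k then 1 else 0, fun j _ => by positivity, fun i _ => ?_⟩
    simp [Finset.mem_range.mpr (Nat.lt_succ_of_le hk)]
  · exact positiveDefinite_zero.congr fun i hi => kraw_eq_zero_of_lt q hi (by omega)

theorem positiveDefinite_one : PositiveDefinite q n (fun _ => 1) :=
  (positiveDefinite_kraw 0).congr fun i _ => (kraw_zero n q i).symm

theorem positiveDefinite_kraw_one_mul_kraw (hq : 2 ≤ q) {k : ℕ} (hk : k ≤ n) :
    PositiveDefinite q n (fun x => kraw n q 1 x * kraw n q k x) := by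
  have hq2 : (0 : ℝ) ≤ q - 2 := by
    rw [sub_nonneg]
    exact_mod_cast hq
  cases k with
  | zero => exact (positiveDefinite_kraw 1).congr fun i _ => by rw [kraw_zero, mul_one]
  | succ k =>
    have hnk : (0 : ℝ) ≤ n - k := by
      rw [sub_nonneg]
      exact_mod_cast (by omega : k ≤ n)
    have hup : PositiveDefinite q n (fun x => (k + 2) * kraw n q (k + 2) x) :=
      (positiveDefinite_kraw _).const_mul (by positivity)
    have hmid : PositiveDefinite q n (fun x => ((q : ℝ) - 2) * (k + 1) * kraw n q (k + 1) x) :=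
      (positiveDefinite_kraw _).const_mul (mul_nonneg hq2 (by positivity))
    have hlow : PositiveDefinite q n (fun x => ((q : ℝ) - 1) * (n - k) * kraw n q k x) :=
      (positiveDefinite_kraw _).const_mul (mul_nonneg (by linarith) hnk)
    refine ((hup.add hmid).add hlow).congr fun i hi => ?_
    rw [kraw_one_mul_kraw_succ q k hi]
    rfl

theorem PositiveDefinite.kraw_one_mul (hq : 2 ≤ q) {h : ℕ → ℝ} (hh : PositiveDefinite q n h) :
    PositiveDefinite q n (fun x => kraw n q 1 x * h x) := by
  obtain ⟨c, hc, hrep⟩ := hh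
  have hterm : ∀ j ∈ Finset.range (n + 1),
      PositiveDefinite q n (fun x => c j * (kraw n q 1 x * kraw n q j x)) := by
    intro j hj
    have hjn : j ≤ n := Nat.lt_succ_iff.mp (Finset.mem_range.mp hj)
    exact (positiveDefinite_kraw_one_mul_kraw hq hjn).const_mul (hc j hjn)
  refine (PositiveDefinite.sum _ hterm).congr fun i hi => ?_
  simp only [hrep i hi, Finset.sum_apply, Finset.mul_sum]
  exact Finset.sum_congr rfl fun j _ => by ring

theorem PositiveDefinite.mul_sub (hq : 2 ≤ q) {h : ℕ → ℝ} (hh : PositiveDefinite q n h) {a : ℝ}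
    (ha : ((q : ℝ) - 1) * n / q ≤ a) : PositiveDefinite q n (fun x => h x * (a - x)) := by
  have hq0 : (0 : ℝ) < q := by exact_mod_cast (by omega : 0 < q)
  refine ((hh.const_mul (sub_nonneg.mpr ha)).add
    ((hh.kraw_one_mul hq).const_mul (inv_nonneg.mpr hq0.le))).congr fun i hi => ?_
  simp only [Pi.add_apply, kraw_one q hi]
  field_simp
  ring

end PositiveDefinite

theorem prod_big_positiveDefinite_general {q n s : ℕ} (hq : 2 ≤ q)
    (a : ℕ → ℝ) (ha : ∀ i, i < s → ((q : ℝ) - 1) * n / q ≤ a i) :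
    PositiveDefinite q n (fun x => ∏ i ∈ Finset.range s, (a i - (x : ℝ))) := by
  induction s with
  | zero => simpa only [Finset.prod_range_zero] using positiveDefinite_one
  | succ s ih =>
    simp only [Finset.prod_range_succ]
    exact (ih fun i hi => ha i (by omega)).mul_sub hq (ha s (by omega))

/-- Corollary 4.4: if `a_1, …, a_s ≥ (q−1)n/q`, then
`h(x) = (a_1 − x)(a_2 − x)⋯(a_s − x)` is positive definite. -/
theorem prod_big_positiveDefinite {q n s : ℕ} (hq : 2 ≤ q) (hn : 1 ≤ n)
    (a : ℕ → ℝ) (ha : ∀ i, i < s → ((q : ℝ) - 1) * n / q ≤ a i) :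
    PositiveDefinite q n (fun x => ∏ i ∈ Finset.range s, (a i - (x : ℝ))) :=
  prod_big_positiveDefinite_general hq a ha
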